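/- arXiv:2211.15728 — 8 statements merged into one kernel-verified Lean document; each statement's English description precedes it below -/
import Mathlib

section
/- If τ i > 0 for all i and s is a critical point of the direct-uplift loss L (i.e., for every j the function t ↦ L(Function.update s j t) has derivative 0 at s j), then for every j one has q j = τ j / ∑_i τ i. -/
/-!
Along the coordinate `s j` the loss is, up to the factor `-1/N`, the affine term `∑ τ i s i` minus
`(∑ τ i) log ∑ exp (s k)`, whose derivatives are `τ j` and `(∑ τ i) q j`. A critical point therefore
forces `τ j = (∑ τ i) q j`, and `∑ τ i > 0` lets us divide.
-/

open Real Finset Function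

noncomputable def softmax {ι : Type*} [Fintype ι] (u : ι → ℝ) (i : ι) : ℝ :=
  exp (u i) / ∑ k, exp (u k)

lemma hasDerivAt_update_apply {𝕜 ι : Type*} [NontriviallyNormedField 𝕜] [DecidableEq ι]
    (x : ι → 𝕜) (j i : ι) :
    HasDerivAt (fun t => update x j t i) ((Pi.single j 1 : ι → 𝕜) i) (x j) :=
  hasDerivAt_pi.1 (hasDerivAt_update x j (x j)) i

section

variable {ι : Type*} [Fintype ι]

lemma sum_exp_pos [Nonempty ι] (u : ι → ℝ) : 0 < ∑ k, exp (u k) :=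
  sum_pos (fun k _ => exp_pos (u k)) univ_nonempty

lemma log_softmax (u : ι → ℝ) (i : ι) :
    log (softmax u i) = u i - log (∑ k, exp (u k)) := by
  have : Nonempty ι := ⟨i⟩
  rw [softmax, log_div (exp_ne_zero _) (sum_exp_pos u).ne', log_exp]

lemma sum_mul_log_softmax (τ u : ι → ℝ) :
    ∑ i, τ i * log (softmax u i) = ∑ i, τ i * u i - (∑ i, τ i) * log (∑ k, exp (u k)) := by
  simp only [log_softmax, mul_sub, sum_sub_distrib, sum_mul]

variable [DecidableEq ι] (s : ι → ℝ) (j : ι)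

lemma hasDerivAt_sum_mul_update (τ : ι → ℝ) :
    HasDerivAt (fun t => ∑ i, τ i * update s j t i) (τ j) (s j) := by
  have h := HasDerivAt.fun_sum fun i (_ : i ∈ univ) =>
    (hasDerivAt_update_apply s j i).const_mul (τ i)
  simpa [Pi.single_apply] using h

lemma hasDerivAt_log_sum_exp_update :
    HasDerivAt (fun t => log (∑ k, exp (update s j t k))) (softmax s j) (s j) := by
  have : Nonempty ι := ⟨j⟩
  have hsum := HasDerivAt.fun_sum fun k (_ : k ∈ univ) => (hasDerivAt_update_apply s j k).exp
  have hlog := hsum.log (by simpa using (sum_exp_pos s).ne')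
  simpa [Pi.single_apply, softmax] using hlog

theorem hasDerivAt_sum_mul_log_softmax_update (τ : ι → ℝ) :
    HasDerivAt (fun t => ∑ i, τ i * log (softmax (update s j t) i))
      (τ j - (∑ i, τ i) * softmax s j) (s j) := by
  simp only [sum_mul_log_softmax]
  exact (hasDerivAt_sum_mul_update s j τ).sub
    ((hasDerivAt_log_sum_exp_update s j).const_mul (∑ i, τ i))

end

theorem direct_uplift_critical_point_general
    (N : ℕ) (s τ : Fin N → ℝ)
    (L : (Fin N → ℝ) → ℝ)
    (hL : L = fun u : Fin N → ℝ =>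
      -(1 / (N : ℝ)) * ∑ i, τ i * Real.log (Real.exp (u i) / ∑ k, Real.exp (u k)))
    (hτ : ∀ i, 0 < τ i)
    (hcrit : ∀ j : Fin N, HasDerivAt (fun t : ℝ => L (Function.update s j t)) 0 (s j)) :
    ∀ j : Fin N, Real.exp (s j) / ∑ k, Real.exp (s k) = τ j / ∑ i, τ i := by
  intro j
  subst hL
  have hN : (N : ℝ) ≠ 0 := Nat.cast_ne_zero.2 (Fin.pos j).ne'
  have hderiv := (hasDerivAt_sum_mul_log_softmax_update s j τ).const_mul (-(1 / (N : ℝ)))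
  have hzero := (hcrit j).unique hderiv
  have hτj : τ j = (∑ i, τ i) * softmax s j := by
    field_simp at hzero
    linarith
  have hτsum : 0 < ∑ i, τ i := sum_pos (fun i _ => hτ i) ⟨j, mem_univ j⟩
  rw [eq_div_iff hτsum.ne', hτj]
  exact mul_comm _ _

/-- at a critical point of the direct-uplift loss, the softmax
values equal the normalized treatment effects. -/
theorem direct_uplift_critical_point
    (N : ℕ) (hN : 0 < N) (s τ : Fin N → ℝ)
    (L : (Fin N → ℝ) → ℝ)
    (hL : L = fun u : Fin N → ℝ =>
      -(1 / (N : ℝ)) * ∑ i, τ i * Real.log (Real.exp (u i) / ∑ k, Real.exp (u k)))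
    (hτ : ∀ i, 0 < τ i)
    (hcrit : ∀ j : Fin N, HasDerivAt (fun t : ℝ => L (Function.update s j t)) 0 (s j)) :
    ∀ j : Fin N, Real.exp (s j) / ∑ k, Real.exp (s k) = τ j / ∑ i, τ i :=
  direct_uplift_critical_point_general N s τ L hL hτ hcrit
end

section
/- If τ i > 0 for all i and s is a critical point of the direct-uplift loss L (i.e., for every j the function t ↦ L(Function.update s j t) has derivative 0 at s j), then for all indices i, j one has s i < s j if and only if τ i < τ j; that is, the scores s rank the treatment effects τ. -/
/-!
Since `log (softmax u i) = u i - log ∑ₖ exp (u k)`, the partial derivative of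
`∑ᵢ τ i * log (softmax u i)` in the coordinate `u j` is `τ j - (∑ᵢ τ i) * softmax u j`.
At a critical point of the loss this vanishes for every `j`, so `softmax s` is proportional
to `τ` with the positive factor `∑ᵢ τ i`, and `softmax s` orders the indices as `s` does.
-/

open Real Finset Function

namespace DirectUplift

theorem hasDerivAt_update_apply {ι : Type*} [DecidableEq ι] (u : ι → ℝ) (j i : ι) :
    HasDerivAt (fun t => update u j t i) ((Pi.single j 1 : ι → ℝ) i) (u j) :=
  hasDerivAt_pi.mp (hasDerivAt_update u j (u j)) i

variable {ι : Type*} [Fintype ι]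

noncomputable def softmax (u : ι → ℝ) (i : ι) : ℝ := exp (u i) / ∑ k, exp (u k)

theorem sum_exp_pos [Nonempty ι] (u : ι → ℝ) : 0 < ∑ k, exp (u k) :=
  Finset.sum_pos (fun k _ => exp_pos (u k)) univ_nonempty

theorem softmax_lt_softmax_iff [Nonempty ι] (u : ι → ℝ) {i j : ι} :
    softmax u i < softmax u j ↔ u i < u j :=
  (div_lt_div_iff_of_pos_right (sum_exp_pos u)).trans exp_lt_exp

theorem log_softmax [Nonempty ι] (u : ι → ℝ) (i : ι) :
    log (softmax u i) = u i - log (∑ k, exp (u k)) := by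
  rw [softmax, log_div (exp_ne_zero _) (sum_exp_pos u).ne', log_exp]

variable [DecidableEq ι]

theorem hasDerivAt_log_sum_exp_update (u : ι → ℝ) (j : ι) :
    HasDerivAt (fun t => log (∑ k, exp (update u j t k))) (softmax u j) (u j) := by
  have : Nonempty ι := ⟨j⟩
  have hsum : HasDerivAt (fun t => ∑ k, exp (update u j t k)) (exp (u j)) (u j) := by
    refine (HasDerivAt.fun_sum fun k _ => (hasDerivAt_update_apply u j k).exp).congr_deriv ?_
    simp [Pi.single_apply]
  simpa only [update_eq_self, softmax] using hsum.log (by simpa using (sum_exp_pos u).ne')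

theorem hasDerivAt_sum_mul_log_softmax_update (τ u : ι → ℝ) (j : ι) :
    HasDerivAt (fun t => ∑ i, τ i * log (softmax (update u j t) i))
      (τ j - (∑ i, τ i) * softmax u j) (u j) := by
  have : Nonempty ι := ⟨j⟩
  have hlin : HasDerivAt (fun t => ∑ i, τ i * update u j t i) (τ j) (u j) := by
    refine (HasDerivAt.fun_sum fun i _ =>
      (hasDerivAt_update_apply u j i).const_mul (τ i)).congr_deriv ?_
    simp [Pi.single_apply]
  have hsplit : (fun t => ∑ i, τ i * log (softmax (update u j t) i)) = fun t =>
      ∑ i, τ i * update u j t i - (∑ i, τ i) * log (∑ k, exp (update u j t k)) := by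
    funext t
    simp only [log_softmax, mul_sub, sum_sub_distrib, sum_mul]
  rw [hsplit]
  exact hlin.sub ((hasDerivAt_log_sum_exp_update u j).const_mul (∑ i, τ i))

theorem eq_sum_mul_softmax_of_hasDerivAt_zero {c : ℝ} (hc : c ≠ 0) (τ u : ι → ℝ) (j : ι)
    (hcrit : HasDerivAt (fun t => c * ∑ i, τ i * log (softmax (update u j t) i)) 0 (u j)) :
    τ j = (∑ i, τ i) * softmax u j := by
  have h := hcrit.unique ((hasDerivAt_sum_mul_log_softmax_update τ u j).const_mul c)
  rcases mul_eq_zero.mp h.symm with h | h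
  · exact absurd h hc
  · exact sub_eq_zero.mp h

end DirectUplift

open DirectUplift in
theorem direct_uplift_ranks_general
    (N : ℕ) (s τ : Fin N → ℝ)
    (L : (Fin N → ℝ) → ℝ)
    (hL : L = fun u : Fin N → ℝ =>
      -(1 / (N : ℝ)) * ∑ i, τ i * Real.log (Real.exp (u i) / ∑ k, Real.exp (u k)))
    (hτ : ∀ i, 0 < τ i)
    (hcrit : ∀ j : Fin N, HasDerivAt (fun t : ℝ => L (Function.update s j t)) 0 (s j)) :
    ∀ i j : Fin N, s i < s j ↔ τ i < τ j := by
  subst hL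
  intro i j
  have : Nonempty (Fin N) := ⟨i⟩
  have hN : -(1 / (N : ℝ)) ≠ 0 := by simp [i.pos.ne']
  have hτ_eq k := eq_sum_mul_softmax_of_hasDerivAt_zero hN τ s k (hcrit k)
  have hT : 0 < ∑ k, τ k := Finset.sum_pos (fun k _ => hτ k) univ_nonempty
  rw [hτ_eq i, hτ_eq j, mul_lt_mul_iff_right₀ hT, softmax_lt_softmax_iff]

/-- at a critical point of the direct-uplift loss, the scores `s`
rank the treatment effects `τ`. -/
theorem direct_uplift_ranks
    (N : ℕ) (hN : 0 < N) (s τ : Fin N → ℝ)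
    (L : (Fin N → ℝ) → ℝ)
    (hL : L = fun u : Fin N → ℝ =>
      -(1 / (N : ℝ)) * ∑ i, τ i * Real.log (Real.exp (u i) / ∑ k, Real.exp (u k)))
    (hτ : ∀ i, 0 < τ i)
    (hcrit : ∀ j : Fin N, HasDerivAt (fun t : ℝ => L (Function.update s j t)) 0 (s j)) :
    ∀ i j : Fin N, s i < s j ↔ τ i < τ j :=
  direct_uplift_ranks_general N s τ L hL hτ hcrit
end

section
/- For every index i, the partial derivative of the direct-ROI loss L with respect to s_i equals -(1/N)·(τr i − q i · τc i); formally, the function t ↦ L(Function.update s i t) has derivative -(1/N)·(τr i − σ(s i)·τc i) at the point s i. -/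
/-! With `q = σ(s)` one has `log (q / (1 - q)) = s` and `log (1 - q) = -log (1 + exp s)`, so each
summand of the loss depends on its own coordinate only, and `d/ds log (1 + exp s) = σ(s)`. -/

/-- The sigmoid function. -/
noncomputable def sigm (t : ℝ) : ℝ := 1 / (1 + Real.exp (-t))

open Finset Real

theorem sigm_eq_exp_div (t : ℝ) : sigm t = exp t / (1 + exp t) := by
  have : 1 + exp t ≠ 0 := by positivity
  rw [sigm, exp_neg]
  field_simp
  ring

theorem one_sub_sigm (t : ℝ) : 1 - sigm t = (1 + exp t)⁻¹ := by
  have : 1 + exp t ≠ 0 := by positivity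
  rw [sigm_eq_exp_div]
  field_simp
  ring

theorem log_sigm_div_one_sub_sigm (t : ℝ) : log (sigm t / (1 - sigm t)) = t := by
  have : 1 + exp t ≠ 0 := by positivity
  rw [one_sub_sigm, sigm_eq_exp_div, div_inv_eq_mul, div_mul_cancel₀ _ this, log_exp]

theorem log_one_sub_sigm (t : ℝ) : log (1 - sigm t) = -log (1 + exp t) := by
  rw [one_sub_sigm, log_inv]

theorem hasDerivAt_log_one_add_exp (t : ℝ) :
    HasDerivAt (fun x => log (1 + exp x)) (sigm t) t := by
  rw [sigm_eq_exp_div]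
  simpa using ((hasDerivAt_exp t).const_add 1).log (by positivity)

theorem hasDerivAt_direct_roi_term (a b t : ℝ) :
    HasDerivAt (fun x => a * log (sigm x / (1 - sigm x)) + b * log (1 - sigm x))
      (a - sigm t * b) t := by
  simp only [log_sigm_div_one_sub_sigm, log_one_sub_sigm]
  exact (((hasDerivAt_id' t).const_mul a).add
    ((hasDerivAt_log_one_add_exp t).neg.const_mul b)).congr_deriv (by ring)

theorem hasDerivAt_sum_update {ι 𝕜 F : Type*} [Fintype ι] [DecidableEq ι]
    [NontriviallyNormedField 𝕜] [NormedAddCommGroup F] [NormedSpace 𝕜 F]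
    {f : ι → 𝕜 → F} {s : ι → 𝕜} {i : ι} {f' : F} (hf : HasDerivAt (f i) f' (s i)) :
    HasDerivAt (fun t => ∑ j, f j (Function.update s i t j)) f' (s i) := by
  have hsplit : (fun t => ∑ j, f j (Function.update s i t j)) =
      fun t => f i t + ∑ j ∈ univ.erase i, f j (s j) := by
    funext t
    rw [← add_sum_erase _ _ (mem_univ i), Function.update_self]
    congr 1
    exact sum_congr rfl fun j hj => by rw [Function.update_of_ne (ne_of_mem_erase hj)]
  rw [hsplit]
  exact hf.add_const _

theorem direct_roi_partial_deriv_general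
    (N : ℕ) (s τr τc : Fin N → ℝ)
    (L : (Fin N → ℝ) → ℝ)
    (hL : L = fun u : Fin N → ℝ => -(1 / (N : ℝ)) *
      ∑ i, (τr i * Real.log (sigm (u i) / (1 - sigm (u i)))
        + τc i * Real.log (1 - sigm (u i))))
    (i : Fin N) :
    HasDerivAt (fun t : ℝ => L (Function.update s i t))
      (-(1 / (N : ℝ)) * (τr i - sigm (s i) * τc i)) (s i) := by
  subst hL
  exact (hasDerivAt_sum_update
    (f := fun j x => τr j * log (sigm x / (1 - sigm x)) + τc j * log (1 - sigm x))
    (hasDerivAt_direct_roi_term (τr i) (τc i) (s i))).const_mul _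

/-- partial derivative of the direct-ROI loss. -/
theorem direct_roi_partial_deriv
    (N : ℕ) (hN : 0 < N) (s τr τc : Fin N → ℝ)
    (L : (Fin N → ℝ) → ℝ)
    (hL : L = fun u : Fin N → ℝ => -(1 / (N : ℝ)) *
      ∑ i, (τr i * Real.log (sigm (u i) / (1 - sigm (u i)))
        + τc i * Real.log (1 - sigm (u i))))
    (i : Fin N) :
    HasDerivAt (fun t : ℝ => L (Function.update s i t))
      (-(1 / (N : ℝ)) * (τr i - sigm (s i) * τc i)) (s i) :=
  direct_roi_partial_deriv_general N s τr τc L hL i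
end

section
/- If τc i > 0 for all i, then the direct-ROI loss L is a convex function on ℝ^N, i.e., ConvexOn ℝ Set.univ L where L : (Fin N → ℝ) → ℝ. -/
/-! Since `log (q / (1 - q)) = s` and `log (1 - q) = -log (1 + exp s)` for `q = σ(s)`, the loss is
`(1/N) ∑ᵢ (τcᵢ · log (1 + exp sᵢ) - τrᵢ · sᵢ)`. The softplus `log (1 + exp x)` is convex because its
derivative is the increasing sigmoid, so each summand is convex whenever `τcᵢ ≥ 0`. -/

open Real Set

lemma sigm_eq_sigmoid : sigm = sigmoid := by
  ext t
  rw [sigm, sigmoid_def, one_div]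

namespace Real

lemma one_sub_sigmoid (t : ℝ) : 1 - sigmoid t = (1 + exp t)⁻¹ := by
  rw [← sigmoid_neg, sigmoid_def, neg_neg]

lemma log_sigmoid_div_one_sub_sigmoid (t : ℝ) : log (sigmoid t / (1 - sigmoid t)) = t := by
  rw [← sigmoid_neg, ← sigmoid_mul_rexp_neg, div_mul_cancel_left₀ (sigmoid_pos t).ne', exp_neg,
    inv_inv, log_exp]

lemma log_one_sub_sigmoid (t : ℝ) : log (1 - sigmoid t) = -log (1 + exp t) := by
  rw [one_sub_sigmoid, log_inv]

lemma hasDerivAt_log_one_add_exp (t : ℝ) :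
    HasDerivAt (fun x => log (1 + exp x)) (sigmoid t) t := by
  have h : exp t / (1 + exp t) = sigmoid t := by
    rw [sigmoid_def, exp_neg]
    field_simp
    ring
  simpa [h] using ((hasDerivAt_exp t).const_add 1).log (by positivity)

lemma convexOn_log_one_add_exp : ConvexOn ℝ univ fun x => log (1 + exp x) := by
  refine Monotone.convexOn_univ_of_deriv
    (fun x => (hasDerivAt_log_one_add_exp x).differentiableAt) ?_
  rw [funext fun x => (hasDerivAt_log_one_add_exp x).deriv]
  exact sigmoid_monotone

end Real

theorem ConvexOn.sum {𝕜 E β ι : Type*} [Semiring 𝕜] [PartialOrder 𝕜] [AddCommMonoid E]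
    [AddCommMonoid β] [PartialOrder β] [IsOrderedAddMonoid β] [SMul 𝕜 E] [Module 𝕜 β]
    {s : Set E} {t : Finset ι} {f : ι → E → β} (hs : Convex 𝕜 s)
    (hf : ∀ i ∈ t, ConvexOn 𝕜 s (f i)) : ConvexOn 𝕜 s fun x => ∑ i ∈ t, f i x := by
  classical
  induction t using Finset.induction_on with
  | empty => simpa using convexOn_const 0 hs
  | insert a t ha ih =>
    simp only [Finset.sum_insert ha]
    exact (hf a (t.mem_insert_self a)).add (ih fun i hi => hf i (Finset.mem_insert_of_mem hi))

lemma convexOn_softplus_sub_linear {c : ℝ} (hc : 0 ≤ c) (r : ℝ) :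
    ConvexOn ℝ univ fun t => c * log (1 + exp t) - r * t :=
  (convexOn_log_one_add_exp.smul hc).sub ((r • LinearMap.id : ℝ →ₗ[ℝ] ℝ).concaveOn convex_univ)

theorem direct_roi_loss_convex_general
    (N : ℕ) (τr τc : Fin N → ℝ)
    (L : (Fin N → ℝ) → ℝ)
    (hL : L = fun u : Fin N → ℝ => -(1 / (N : ℝ)) *
      ∑ i, (τr i * Real.log (sigm (u i) / (1 - sigm (u i)))
        + τc i * Real.log (1 - sigm (u i))))
    (hτc : ∀ i, 0 < τc i) :
    ConvexOn ℝ Set.univ L := by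
  have hL_softplus :
      L = fun u => (1 / (N : ℝ)) • ∑ i, (τc i * log (1 + exp (u i)) - τr i * u i) := by
    ext u
    simp only [hL, sigm_eq_sigmoid, log_sigmoid_div_one_sub_sigmoid, log_one_sub_sigmoid,
      smul_eq_mul, Finset.sum_add_distrib, Finset.sum_sub_distrib, mul_neg, Finset.sum_neg_distrib]
    ring
  rw [hL_softplus]
  refine ConvexOn.smul (by positivity) (ConvexOn.sum convex_univ fun i _ => ?_)
  exact (convexOn_softplus_sub_linear (hτc i).le (τr i)).comp_linearMap
    (LinearMap.proj i : (Fin N → ℝ) →ₗ[ℝ] ℝ)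

/-- if all incremental costs are positive, the direct-ROI loss is
convex on ℝ^N. -/
theorem direct_roi_loss_convex
    (N : ℕ) (hN : 0 < N) (τr τc : Fin N → ℝ)
    (L : (Fin N → ℝ) → ℝ)
    (hL : L = fun u : Fin N → ℝ => -(1 / (N : ℝ)) *
      ∑ i, (τr i * Real.log (sigm (u i) / (1 - sigm (u i)))
        + τc i * Real.log (1 - sigm (u i))))
    (hτc : ∀ i, 0 < τc i) :
    ConvexOn ℝ Set.univ L :=
  direct_roi_loss_convex_general N τr τc L hL hτc
end

section
/- (Property 2) Assume the Law of Diminishing Marginal Utility: ℓ (j+1) ≤ ℓ j for all 1 ≤ j ≤ L−2. Let α ∈ ℝ and j* ∈ {1,…,L} satisfy ℓ j* ≤ α whenever j* ≤ L−1 and α ≤ ℓ (j*−1) whenever j* ≥ 2. Then r j* − α·c j* ≥ r j − α·c j for all j ∈ {1,…,L}; that is, j* maximizes j ↦ r j − α·c j. Together with Property 1, this shows that selecting treatment j* with ℓ j* ≤ α ≤ ℓ (j*−1) is equivalent to the Lagrangian duality rule j* = argmax_j (r j − α·c j). -/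
/-- Property 2: under the Law of Diminishing Marginal Utility,
if `ℓ j* ≤ α` (when `j* ≤ L - 1`) and `α ≤ ℓ (j* - 1)` (when `j* ≥ 2`), then
`j*` maximizes `j ↦ r j - α * c j` over `{1, …, L}`. -/
theorem lagrangian_property_two
    (L : ℕ) (hL : 2 ≤ L) (r c : ℕ → ℝ)
    (hc : ∀ j, 1 ≤ j → j ≤ L - 1 → c j < c (j + 1))
    (ℓ : ℕ → ℝ) (hℓ : ∀ j, 1 ≤ j → j ≤ L - 1 →
      ℓ j = (r (j + 1) - r j) / (c (j + 1) - c j))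
    (hdim : ∀ j, 1 ≤ j → j ≤ L - 2 → ℓ (j + 1) ≤ ℓ j)
    (α : ℝ) (jstar : ℕ) (hj1 : 1 ≤ jstar) (hj2 : jstar ≤ L)
    (hleft : jstar ≤ L - 1 → ℓ jstar ≤ α)
    (hright : 2 ≤ jstar → α ≤ ℓ (jstar - 1)) :
    ∀ j, 1 ≤ j → j ≤ L → r j - α * c j ≤ r jstar - α * c jstar := by
  -- step formula
  have hstep : ∀ j, 1 ≤ j → j ≤ L - 1 →
      (r (j+1) - α * c (j+1)) - (r j - α * c j) = (ℓ j - α) * (c (j+1) - c j) := by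
    intro j h1 h2
    have hcpos : 0 < c (j+1) - c j := by linarith [hc j h1 h2]
    rw [hℓ j h1 h2]
    field_simp
    ring
  -- monotonicity of ℓ
  have hmono : ∀ i j, 1 ≤ i → i ≤ j → j ≤ L - 1 → ℓ j ≤ ℓ i := by
    intro i j h1 hij hjL
    induction j, hij using Nat.le_induction with
    | base => exact le_refl _
    | succ n hn ih =>
      have hn2 : n ≤ L - 2 := by omega
      exact le_trans (hdim n (by omega) hn2) (ih (by omega))
  intro j hj hjL
  rcases le_or_gt jstar j with hij | hij
  · -- f decreasing above jstar
    have key : ∀ m, jstar ≤ m → m ≤ L → r m - α * c m ≤ r jstar - α * c jstar := by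
      intro m hm
      induction m, hm using Nat.le_induction with
      | base => intro _; exact le_refl _
      | succ n hn ih =>
        intro hnL
        have hn1 : 1 ≤ n := le_trans hj1 hn
        have hnL1 : n ≤ L - 1 := by omega
        have hα : ℓ n ≤ α :=
          le_trans (hmono jstar n hj1 hn (by omega)) (hleft (by omega))
        have hcpos : 0 < c (n+1) - c n := by linarith [hc n hn1 hnL1]
        have := hstep n hn1 hnL1
        nlinarith [ih (by omega)]
    exact key j hij hjL
  · -- f increasing below jstar
    have key : ∀ m, j ≤ m → m ≤ jstar → r j - α * c j ≤ r m - α * c m := by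
      intro m hm
      induction m, hm using Nat.le_induction with
      | base => intro _; exact le_refl _
      | succ n hn ih =>
        intro hnj
        have hn1 : 1 ≤ n := le_trans hj hn
        have hnL1 : n ≤ L - 1 := by omega
        have hα : α ≤ ℓ n := by
          have h2 : 2 ≤ jstar := by omega
          exact le_trans (hright h2) (hmono n (jstar - 1) hn1 (by omega) (by omega))
        have hcpos : 0 < c (n+1) - c n := by linarith [hc n hn1 hnL1]
        have := hstep n hn1 hnL1
        nlinarith [ih (by omega)]
    exact key jstar (le_of_lt hij) (le_refl _)
end

section
/- If there exist indices j, k with τr j · τc k ≠ τr k · τc j (i.e., the ROIs τr i / τc i are not all equal), then the Direct Rank loss L has no critical point: for every s : Fin N → ℝ there exists an index j such that the partial derivative of L with respect to s_j at s is nonzero. Hence the Direct Rank loss cannot converge to a stable extreme point. -/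
set_option maxHeartbeats 1000000

private lemma hasDerivAt_tanh' (x : ℝ) :
    HasDerivAt Real.tanh (1 / Real.cosh x ^ 2) x := by
  have h : HasDerivAt (fun y => Real.sinh y / Real.cosh y)
      ((Real.cosh x * Real.cosh x - Real.sinh x * Real.sinh x) / Real.cosh x ^ 2) x :=
    (Real.hasDerivAt_sinh x).div (Real.hasDerivAt_cosh x) (ne_of_gt (Real.cosh_pos x))
  have heq : Real.cosh x * Real.cosh x - Real.sinh x * Real.sinh x = 1 := by
    have := Real.cosh_sq_sub_sinh_sq x
    nlinarith [this]
  have h2 : (fun y => Real.sinh y / Real.cosh y) = Real.tanh := by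
    funext y; rw [Real.tanh_eq_sinh_div_cosh]
  rw [h2, heq] at h
  exact h

private lemma hasDerivAt_exp_tanh (c : ℝ) (x : ℝ) :
    HasDerivAt (fun t => c * Real.exp (Real.tanh t))
      (c * (Real.exp (Real.tanh x) * (1 / Real.cosh x ^ 2))) x := by
  exact (((hasDerivAt_tanh' x).exp)).const_mul c

/-- if the ROIs are not all equal, the Direct Rank loss has no
critical point. -/
theorem direct_rank_no_critical_point
    (N : ℕ) (hN : 0 < N) (τr τc : Fin N → ℝ)
    (hr : ∀ i, 0 < τr i) (hc : ∀ i, 0 < τc i)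
    (L : (Fin N → ℝ) → ℝ)
    (hL : L = fun u : Fin N → ℝ =>
      (∑ i, τc i * Real.exp (Real.tanh (u i))) /
        (∑ i, τr i * Real.exp (Real.tanh (u i))))
    (hne : ∃ j k : Fin N, τr j * τc k ≠ τr k * τc j) :
    ∀ s : Fin N → ℝ, ∃ j : Fin N,
      deriv (fun t : ℝ => L (Function.update s j t)) (s j) ≠ 0 := by
  intro s
  by_contra hcon
  push_neg at hcon
  -- Notation
  set E : ℝ → ℝ := fun t => Real.exp (Real.tanh t) with hE
  have hEpos : ∀ t, 0 < E t := fun t => Real.exp_pos _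
  set Sc : ℝ := ∑ i, τc i * E (s i) with hSc
  set Sr : ℝ := ∑ i, τr i * E (s i) with hSr
  have hSrpos : 0 < Sr := by
    apply Finset.sum_pos
    · intro i _; exact mul_pos (hr i) (hEpos (s i))
    · exact Finset.univ_nonempty_iff.mpr ⟨⟨0, hN⟩⟩
  -- Key: for each j, τc j * Sr = τr j * Sc
  have key : ∀ j : Fin N, τc j * Sr = τr j * Sc := by
    intro j
    -- split sums
    have hsplit : ∀ (τ : Fin N → ℝ) (t : ℝ),
        (∑ i, τ i * E (Function.update s j t i))
          = τ j * E t + ∑ i ∈ Finset.univ.erase j, τ i * E (s i) := by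
      intro τ t
      have hf : (fun i => τ i * E (Function.update s j t i))
          = Function.update (fun i => τ i * E (s i)) j (τ j * E t) := by
        funext i
        by_cases h : i = j
        · subst h; simp
        · rw [Function.update_of_ne h, Function.update_of_ne h]
      calc (∑ i, τ i * E (Function.update s j t i))
          = ∑ i, Function.update (fun i => τ i * E (s i)) j (τ j * E t) i := by rw [hf]
        _ = τ j * E t + ∑ i ∈ Finset.univ.erase j, τ i * E (s i) :=
            by rw [Finset.sum_update_of_mem (Finset.mem_univ j),
                  Finset.sdiff_singleton_eq_erase]
    set Ac : ℝ := ∑ i ∈ Finset.univ.erase j, τc i * E (s i) with hAc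
    set Ar : ℝ := ∑ i ∈ Finset.univ.erase j, τr i * E (s i) with hAr
    have hfun : (fun t : ℝ => L (Function.update s j t))
        = fun t => (τc j * E t + Ac) / (τr j * E t + Ar) := by
      funext t
      rw [hL]
      simp only
      rw [hsplit τc t, hsplit τr t]
    have hDen : τr j * E (s j) + Ar = Sr := by
      rw [hSr, hAr, ← Finset.add_sum_erase _ _ (Finset.mem_univ j)]
    have hNum : τc j * E (s j) + Ac = Sc := by
      rw [hSc, hAc, ← Finset.add_sum_erase _ _ (Finset.mem_univ j)]
    set d : ℝ := E (s j) * (1 / Real.cosh (s j) ^ 2) with hd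
    have hdpos : 0 < d := mul_pos (hEpos _) (by positivity)
    have hnum : HasDerivAt (fun t => τc j * E t + Ac) (τc j * d) (s j) :=
      (hasDerivAt_exp_tanh (τc j) (s j)).add_const Ac
    have hden : HasDerivAt (fun t => τr j * E t + Ar) (τr j * d) (s j) :=
      (hasDerivAt_exp_tanh (τr j) (s j)).add_const Ar
    have hdenne : τr j * E (s j) + Ar ≠ 0 := by rw [hDen]; exact ne_of_gt hSrpos
    have hder : HasDerivAt (fun t : ℝ => L (Function.update s j t))
        ((τc j * d * (τr j * E (s j) + Ar) - (τc j * E (s j) + Ac) * (τr j * d))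
          / (τr j * E (s j) + Ar) ^ 2) (s j) := by
      rw [hfun]
      exact hnum.div hden hdenne
    have h0 := hcon j
    rw [hder.deriv] at h0
    rw [hDen, hNum] at h0
    have h1 : τc j * d * Sr - Sc * (τr j * d) = 0 := by
      rcases div_eq_zero_iff.mp h0 with h | h
      · exact h
      · exact absurd (pow_eq_zero_iff (by norm_num) |>.mp h) (ne_of_gt hSrpos)
    have : d * (τc j * Sr - τr j * Sc) = 0 := by ring_nf; ring_nf at h1; linarith
    have h2 : τc j * Sr - τr j * Sc = 0 := by
      rcases mul_eq_zero.mp this with h | h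
      · exact absurd h (ne_of_gt hdpos)
      · exact h
    linarith
  obtain ⟨j, k, hjk⟩ := hne
  apply hjk
  have h1 := key j
  have h2 := key k
  have : τr j * τc k * Sr = τr k * τc j * Sr := by
    calc τr j * τc k * Sr = τr j * (τc k * Sr) := by ring
    _ = τr j * (τr k * Sc) := by rw [h2]
    _ = τr k * (τr j * Sc) := by ring
    _ = τr k * (τc j * Sr) := by rw [h1]
    _ = τr k * τc j * Sr := by ring
  exact mul_right_cancel₀ (ne_of_gt hSrpos) this
end

section
/- For every feasible set S : Finset (Fin N) with ∑_{i ∈ S} c i ≤ B, one has ∑_{i ∈ S} v i ≤ (∑_{i < k} v i) + max_i v i. Consequently, writing OPT for the maximum of ∑_{i ∈ S} v i over feasible S, the greedy prefix value ∑_{i < k} v i satisfies ∑_{i < k} v i ≥ OPT − max_i v i, i.e., the Greedy Algorithm for the binary treatment assignment (0/1 knapsack) problem has approximation ratio at least 1 − (max_i v i)/OPT. -/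
/-! Let `κ = k` be the first item the greedy prefix `P = {i < k}` leaves out and `r = v κ / c κ`.
Items of `P` have ratio at least `r` and all other items at most `r`, so exchanging `P` for a
feasible `S` changes the value by at most `r` times the change in cost. Since adding `κ` would
overflow the budget, that change in cost is below `c κ`, and the value gained is at most `v κ`. -/

open Finset

theorem Finset.sum_sub_sum_le_mul_sub_of_threshold {ι R : Type*} [DecidableEq ι]
    [CommRing R] [PartialOrder R] [IsOrderedRing R] {S P : Finset ι} {v c : ι → R} {r : R}
    (hP : ∀ i ∈ P \ S, r * c i ≤ v i) (hS : ∀ i ∈ S \ P, v i ≤ r * c i) :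
    ∑ i ∈ S, v i - ∑ i ∈ P, v i ≤ r * (∑ i ∈ S, c i - ∑ i ∈ P, c i) := by
  rw [← sum_sdiff_sub_sum_sdiff, ← sum_sdiff_sub_sum_sdiff (s₁ := P), mul_sub, mul_sum, mul_sum]
  exact sub_le_sub (sum_le_sum hS) (sum_le_sum hP)

theorem Finset.sum_le_sum_Iio_add_of_ratio_antitone {ι : Type*} [LinearOrder ι]
    [LocallyFiniteOrderBot ι] {v c : ι → ℝ}
    (hsorted : ∀ i j, i ≤ j → v j * c i ≤ v i * c j) {κ : ι} (hvκ : 0 ≤ v κ) (hcκ : 0 < c κ)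
    {S : Finset ι} (hS : ∑ i ∈ S, c i ≤ c κ + ∑ i ∈ Iio κ, c i) :
    ∑ i ∈ S, v i ≤ ∑ i ∈ Iio κ, v i + v κ := by
  classical
  have hexchange := sum_sub_sum_le_mul_sub_of_threshold (S := S) (P := Iio κ) (v := v) (c := c)
    (r := v κ / c κ)
    (fun i hi => by
      rw [div_mul_eq_mul_div, div_le_iff₀ hcκ]
      exact hsorted i κ (mem_Iio.mp (mem_sdiff.mp hi).1).le)
    (fun i hi => by
      rw [div_mul_eq_mul_div, le_div_iff₀ hcκ]
      exact hsorted κ i (not_lt.mp (mem_Iio.not.mp (mem_sdiff.mp hi).2)))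
  have hcost : v κ / c κ * (∑ i ∈ S, c i - ∑ i ∈ Iio κ, c i) ≤ v κ := by
    calc v κ / c κ * (∑ i ∈ S, c i - ∑ i ∈ Iio κ, c i) ≤ v κ / c κ * c κ := by
          gcongr; linarith
      _ = v κ := div_mul_cancel₀ _ hcκ.ne'
  linarith

theorem Fin.filter_val_lt_eq_Iio {N : ℕ} (κ : Fin N) :
    univ.filter (fun i : Fin N => (i : ℕ) < κ) = Iio κ := by
  ext i
  simp only [mem_filter, mem_univ, true_and, mem_Iio]
  omega

theorem Fin.filter_val_lt_succ_eq_Iic {N : ℕ} (κ : Fin N) :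
    univ.filter (fun i : Fin N => (i : ℕ) < κ + 1) = Iic κ := by
  ext i
  simp only [mem_filter, mem_univ, true_and, mem_Iic]
  omega

theorem greedy_knapsack_approx_general
    (N : ℕ) (hN : 0 < N) (v c : Fin N → ℝ)
    (hv : ∀ i, 0 < v i) (hc : ∀ i, 0 < c i)
    (B : ℝ)
    (hsorted : ∀ i j : Fin N, i ≤ j → v j * c i ≤ v i * c j)
    (k : ℕ) (hkN : k ≤ N)
    (hkmax : ∀ m : ℕ, m ≤ N →
      (∑ i ∈ Finset.univ.filter (fun i : Fin N => (i : ℕ) < m), c i) ≤ B → m ≤ k) :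
    ∀ S : Finset (Fin N), (∑ i ∈ S, c i) ≤ B →
      ∑ i ∈ S, v i ≤
        (∑ i ∈ Finset.univ.filter (fun i : Fin N => (i : ℕ) < k), v i)
          + Finset.univ.sup' (Finset.univ_nonempty_iff.mpr ⟨⟨0, hN⟩⟩) v := by
  intro S hS
  have hle_max : ∀ i, v i ≤ univ.sup' (univ_nonempty_iff.mpr ⟨⟨0, hN⟩⟩) v :=
    fun i => le_sup' v (mem_univ i)
  rcases hkN.lt_or_eq with hk | rfl
  · set κ : Fin N := ⟨k, hk⟩
    have hoverflow : B < c κ + ∑ i ∈ Iio κ, c i := by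
      by_contra! hfits
      rw [add_sum_Iio_eq_sum_Iic, ← Fin.filter_val_lt_succ_eq_Iic] at hfits
      exact absurd (hkmax (k + 1) hk hfits) (by omega)
    rw [Fin.filter_val_lt_eq_Iio κ]
    have := sum_le_sum_Iio_add_of_ratio_antitone hsorted (hv κ).le (hc κ) (hS.trans hoverflow.le)
    linarith [hle_max κ]
  · have hprefix : univ.filter (fun i : Fin k => (i : ℕ) < k) = univ := by
      ext i; simp
    rw [hprefix]
    have := sum_le_univ_sum_of_nonneg (s := S) (fun i => (hv i).le)
    linarith [hv ⟨0, hN⟩, hle_max ⟨0, hN⟩]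

/-- greedy approximation guarantee for the binary treatment
assignment (0/1 knapsack) problem: every feasible set has value at most the
greedy prefix value plus the maximum item value; equivalently the greedy prefix
value is at least `OPT - max_i v i`. -/
theorem greedy_knapsack_approx
    (N : ℕ) (hN : 0 < N) (v c : Fin N → ℝ)
    (hv : ∀ i, 0 < v i) (hc : ∀ i, 0 < c i)
    (B : ℝ) (hB : 0 ≤ B)
    (hsorted : ∀ i j : Fin N, i ≤ j → v j * c i ≤ v i * c j)
    (k : ℕ) (hkN : k ≤ N)
    (hfeas : ∑ i ∈ Finset.univ.filter (fun i : Fin N => (i : ℕ) < k), c i ≤ B)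
    (hkmax : ∀ m : ℕ, m ≤ N →
      (∑ i ∈ Finset.univ.filter (fun i : Fin N => (i : ℕ) < m), c i) ≤ B → m ≤ k) :
    ∀ S : Finset (Fin N), (∑ i ∈ S, c i) ≤ B →
      ∑ i ∈ S, v i ≤
        (∑ i ∈ Finset.univ.filter (fun i : Fin N => (i : ℕ) < k), v i)
          + Finset.univ.sup' (Finset.univ_nonempty_iff.mpr ⟨⟨0, hN⟩⟩) v :=
  greedy_knapsack_approx_general N hN v c hv hc B hsorted k hkN hkmax
end

section
/- Under the stated independence and integrability assumptions, ∫ Y·W dμ[·|{ω : T ω = true}] − ∫ Y·W dμ[·|{ω : T ω = false}] = ∫ (Y1 − Y0)·W dμ; that is, the difference between the conditional means of Y·W on the treatment and control groups equals the unconditional mean of the individual treatment effect times W. -/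
/-!
Conditioning on the event `T ∈ s` does not change the mean of a random variable independent
of `T`. On `{T = true}` the observed `Y * W` equals `Y1 * W` and on `{T = false}` it equals
`Y0 * W`, so the two conditional means are `𝔼[Y1 * W]` and `𝔼[Y0 * W]`, and their difference
is `𝔼[(Y1 - Y0) * W]` by linearity.
-/

open MeasureTheory ProbabilityTheory

namespace ProbabilityTheory

variable {Ω α β E : Type*} [MeasurableSpace Ω] [MeasurableSpace α] [MeasurableSpace β]
  [NormedAddCommGroup E] [NormedSpace ℝ E] {μ : Measure Ω}

lemma IndepFun.integral_comp_cond_preimage [IsFiniteMeasure μ] {T : Ω → α} {X : Ω → β}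
    (hTX : IndepFun T X μ) (hT : Measurable T) (hX : AEMeasurable X μ) {s : Set α}
    (hs : MeasurableSet s) (hμs : μ (T ⁻¹' s) ≠ 0) {f : β → E}
    (hf : AEStronglyMeasurable f (μ.map X)) :
    ∫ ω, f (X ω) ∂μ[|T ⁻¹' s] = ∫ ω, f (X ω) ∂μ := by
  rw [cond, integral_smul_measure,
    ((IndepFun_iff_Indep T X μ).mp hTX).setIntegral_eq_smul hT.comap_le hX ⟨s, hs, rfl⟩ hf,
    smul_smul, measureReal_def, ← ENNReal.toReal_mul,
    ENNReal.inv_mul_cancel hμs (measure_ne_top μ _), ENNReal.toReal_one, one_smul]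

lemma integral_cond_congr {s : Set Ω} (hs : MeasurableSet s) {f g : Ω → E}
    (hfg : ∀ ω ∈ s, f ω = g ω) : ∫ ω, f ω ∂μ[|s] = ∫ ω, g ω ∂μ[|s] :=
  integral_congr_ae (ae_cond_of_forall_mem hs hfg)

end ProbabilityTheory

/-- under RCT (independence of the treatment indicator from the
potential outcomes and the weight), the difference between the conditional
means of `Y * W` on the treatment and control groups equals the unconditional
mean of `(Y1 - Y0) * W`. -/
theorem treatment_effect_identification
    {Ω : Type*} [MeasurableSpace Ω] (μ : Measure Ω) [IsProbabilityMeasure μ]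
    (T : Ω → Bool) (hT : Measurable T)
    (Y0 Y1 W : Ω → ℝ)
    (hpos : 0 < μ {ω | T ω = true}) (hlt : μ {ω | T ω = true} < 1)
    (hindep : IndepFun T (fun ω => (Y0 ω, Y1 ω, W ω)) μ)
    (hint1 : Integrable (fun ω => Y1 ω * W ω) μ)
    (hint0 : Integrable (fun ω => Y0 ω * W ω) μ)
    (Y : Ω → ℝ) (hY : Y = fun ω => if T ω then Y1 ω else Y0 ω) :
    (∫ ω, Y ω * W ω ∂(μ[|{ω | T ω = true}]))
        - (∫ ω, Y ω * W ω ∂(μ[|{ω | T ω = false}]))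
      = ∫ ω, (Y1 ω - Y0 ω) * W ω ∂μ := by
  have hfalse : μ (T ⁻¹' {false}) ≠ 0 := by
    rw [← Bool.not_true, ← Bool.compl_singleton, Set.preimage_compl,
      prob_compl_eq_one_sub (hT (by simp))]
    exact (tsub_pos_of_lt hlt).ne'
  have hind1 : IndepFun T (fun ω => Y1 ω * W ω) μ :=
    hindep.comp (ψ := fun p : ℝ × ℝ × ℝ => p.2.1 * p.2.2) measurable_id (by fun_prop)
  have hind0 : IndepFun T (fun ω => Y0 ω * W ω) μ :=
    hindep.comp (ψ := fun p : ℝ × ℝ × ℝ => p.1 * p.2.2) measurable_id (by fun_prop)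
  have htreated : ∫ ω, Y ω * W ω ∂μ[|{ω | T ω = true}] =
      ∫ ω, Y1 ω * W ω ∂μ := calc
    _ = ∫ ω, Y1 ω * W ω ∂μ[|T ⁻¹' {true}] :=
      integral_cond_congr (hT (by simp)) fun ω (hω : T ω = true) => by simp [hY, hω]
    _ = _ := hind1.integral_comp_cond_preimage hT hint1.aemeasurable (s := {true}) (by simp)
      hpos.ne' (f := id) aestronglyMeasurable_id
  have hcontrol : ∫ ω, Y ω * W ω ∂μ[|{ω | T ω = false}] =
      ∫ ω, Y0 ω * W ω ∂μ := calc
    _ = ∫ ω, Y0 ω * W ω ∂μ[|T ⁻¹' {false}] :=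
      integral_cond_congr (hT (by simp)) fun ω (hω : T ω = false) => by simp [hY, hω]
    _ = _ := hind0.integral_comp_cond_preimage hT hint0.aemeasurable (s := {false}) (by simp)
      hfalse (f := id) aestronglyMeasurable_id
  rw [htreated, hcontrol, ← integral_sub hint1 hint0]
  simp only [sub_mul]
end
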